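/- arXiv:math/0408060 — 5 statements merged into one kernel-verified Lean document; each statement's English description precedes it below -/
import Mathlib

section
/- In the Abelian sandpile model on a finite volume V, the stabilization of an unstable configuration is well defined: any two maximal sequences of legal topplings starting from the same configuration η topple each site the same number of times and result in the same stable configuration. -/
/- The Abelian sandpile model on ℤ^d.  Sites are `Fin d → ℤ`; the toppling matrix is
`Δ_{xx} = 2d`, `Δ_{xy} = -1` for nearest neighbours, `0` otherwise.  Toppling in volume `V`
uses the matrix restricted to `V` (grains leaving `V` disappear).  `LegalSeq V η l η'`
says that `l` is a sequence of legal topplings in `V` taking `η` to `η'`. -/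

open scoped Classical

abbrev Site (d : ℕ) := Fin d → ℤ

def adjacent {d : ℕ} (x y : Site d) : Prop := (∑ i, |x i - y i|) = 1

noncomputable def lap (d : ℕ) (x y : Site d) : ℤ :=
  if x = y then 2 * d else if adjacent x y then -1 else 0

abbrev Config (d : ℕ) := Site d → ℤ

noncomputable def lapV {d : ℕ} (V : Finset (Site d)) (x y : Site d) : ℤ :=
  if x ∈ V ∧ y ∈ V then lap d x y else 0

noncomputable def topple {d : ℕ} (V : Finset (Site d)) (x : Site d) (η : Config d) :
    Config d := fun y => η y - lapV V x y

def Stable {d : ℕ} (V : Finset (Site d)) (η : Config d) : Prop := ∀ x ∈ V, η x ≤ 2 * d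

/-- `l` is a sequence of legal topplings in volume `V` carrying `η` to `η'`. -/
def LegalSeq {d : ℕ} (V : Finset (Site d)) : Config d → List (Site d) → Config d → Prop
  | η, [], η' => η' = η
  | η, x :: l, η' => x ∈ V ∧ (2 * d : ℤ) < η x ∧ LegalSeq V (topple V x η) l η'

noncomputable def addGrain {d : ℕ} (x : Site d) (η : Config d) : Config d :=
  fun y => if y = x then η y + 1 else η y

/-! Off the diagonal the toppling matrix is nonpositive, so toppling one site never lowers the
height at another, and topplings commute. Hence a site that is unstable in `η` must occur in every
maximal legal sequence from `η`, and it can be moved to the front of that sequence without breaking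
legality. Induction on the first sequence then shows that any two maximal legal sequences are
permutations of each other and end in the same configuration. -/

lemma lapV_nonpos_of_ne {d : ℕ} (V : Finset (Site d)) {x y : Site d} (h : x ≠ y) :
    lapV V x y ≤ 0 := by
  unfold lapV lap
  split_ifs <;> simp_all

lemma le_topple_of_ne {d : ℕ} (V : Finset (Site d)) {x y : Site d} (h : x ≠ y) (η : Config d) :
    η y ≤ topple V x η y := by
  have := lapV_nonpos_of_ne V h
  simp only [topple]
  linarith

lemma topple_comm {d : ℕ} (V : Finset (Site d)) (x y : Site d) (η : Config d) :
    topple V x (topple V y η) = topple V y (topple V x η) := by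
  funext z
  simp only [topple]
  ring

namespace LegalSeq

variable {d : ℕ} {V : Finset (Site d)}

lemma le_of_notMem {x : Site d} {l : List (Site d)} {η ξ : Config d}
    (h : LegalSeq V η l ξ) (hx : x ∉ l) : η x ≤ ξ x := by
  induction l generalizing η with
  | nil => exact (congrFun h x).ge
  | cons a t ih =>
    obtain ⟨-, -, ht⟩ := h
    rw [List.mem_cons, not_or] at hx
    exact (le_topple_of_ne V (Ne.symm hx.1) η).trans (ih ht hx.2)

lemma mem_of_stable {x : Site d} {l : List (Site d)} {η ξ : Config d}
    (h : LegalSeq V η l ξ) (hξ : Stable V ξ) (hxV : x ∈ V) (hx : (2 * d : ℤ) < η x) :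
    x ∈ l := by
  by_contra hnot
  exact (hx.trans_le (h.le_of_notMem hnot)).not_ge (hξ x hxV)

lemma cons_erase {x : Site d} {l : List (Site d)} {η ξ : Config d}
    (h : LegalSeq V η l ξ) (hmem : x ∈ l) (hxV : x ∈ V) (hx : (2 * d : ℤ) < η x) :
    LegalSeq V η (x :: l.erase x) ξ := by
  induction l generalizing η with
  | nil => simp at hmem
  | cons a t ih =>
    by_cases hax : a = x
    · subst hax
      rwa [List.erase_cons_head]
    · obtain ⟨haV, ha, ht⟩ := h
      have hmem' : x ∈ t := (List.mem_cons.mp hmem).resolve_left (Ne.symm hax)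
      obtain ⟨-, -, ht'⟩ := ih ht hmem' (hx.trans_le (le_topple_of_ne V hax η))
      rw [List.erase_cons_tail (by simpa using hax)]
      refine ⟨hxV, hx, haV, ha.trans_le (le_topple_of_ne V (Ne.symm hax) η), ?_⟩
      rwa [topple_comm]

theorem perm_of_stable {l l' : List (Site d)} {η ξ ξ' : Config d}
    (hl : LegalSeq V η l ξ) (hξ : Stable V ξ) (hl' : LegalSeq V η l' ξ') (hξ' : Stable V ξ') :
    l.Perm l' ∧ ξ = ξ' := by
  induction l generalizing η l' with
  | nil =>
    cases l' with
    | nil => exact ⟨.refl _, hl.trans hl'.symm⟩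
    | cons a t =>
      obtain ⟨haV, ha, -⟩ := hl'
      exact absurd (hl.mem_of_stable hξ haV ha) List.not_mem_nil
  | cons x t ih =>
    obtain ⟨hxV, hx, ht⟩ := hl
    have hmem := hl'.mem_of_stable hξ' hxV hx
    obtain ⟨-, -, ht'⟩ := hl'.cons_erase hmem hxV hx
    obtain ⟨hperm, rfl⟩ := ih ht ht'
    exact ⟨(hperm.cons x).trans (List.perm_cons_erase hmem).symm, rfl⟩

end LegalSeq

/-- the stabilization of a configuration in a finite volume is well defined:
any two maximal sequences of legal topplings starting from the same configuration `η`
topple each site the same number of times and end in the same stable configuration. -/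
theorem stabilization_well_defined
    {d : ℕ} (V : Finset (Site d)) (η : Config d)
    (l l' : List (Site d)) (ξ ξ' : Config d)
    (hl : LegalSeq V η l ξ) (hξ : Stable V ξ)
    (hl' : LegalSeq V η l' ξ') (hξ' : Stable V ξ') :
    (∀ y, l.count y = l'.count y) ∧ ξ = ξ' := by
  obtain ⟨hperm, hξξ'⟩ := hl.perm_of_stable hξ hl' hξ'
  exact ⟨fun y => hperm.count_eq y, hξξ'⟩
end

section
/- The number of recurrent configurations of the Abelian sandpile model on a finite set V ⊂ Z^d equals det(Δ_V), the determinant of the toppling matrix restricted to V. -/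
/- The Abelian sandpile model on ℤ^d.  Sites are `Fin d → ℤ`; the toppling matrix is
`Δ_{xx} = 2d`, `Δ_{xy} = -1` for nearest neighbours, `0` otherwise.  Toppling in volume `V`
uses the matrix restricted to `V` (grains leaving `V` disappear).  `LegalSeq V η l η'`
says that `l` is a sequence of legal topplings in `V` taking `η` to `η'`. -/

open scoped Classical

/-- The height (in `{1,…,2d}`) of a configuration encoded with values in `Fin (2d)`. -/
def heightOf {d : ℕ} {V : Finset (Site d)} (η : {x // x ∈ V} → Fin (2 * d))
    (z : {x // x ∈ V}) : ℤ := (η z : ℤ) + 1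

/-- A configuration on `V` is recurrent iff it contains no forbidden subconfiguration:
there is no nonempty `S ⊆ V` with `η(x) ≤ -∑_{y ∈ S∖{x}} Δ_{xy}` for all `x ∈ S`. -/
def RecurrentOn {d : ℕ} (V : Finset (Site d)) (η : {x // x ∈ V} → Fin (2 * d)) : Prop :=
  ∀ S : Finset {x // x ∈ V}, S.Nonempty →
    ∃ x ∈ S, ¬ (heightOf η x ≤ -∑ y ∈ S.erase x, lap d x.1 y.1)

/-- The toppling matrix restricted to `V`. -/
noncomputable def lapMat {d : ℕ} (V : Finset (Site d)) :
    Matrix {x // x ∈ V} {x // x ∈ V} ℤ := fun a b => lap d a.1 b.1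

/-!
Dhar's theorem: the stable configurations without forbidden subconfiguration ("allowed") form a
system of representatives of `ℤ^V / Δ ℤ^V`, a group of order `|det Δ|`.

Fix `u > 0` with `Δ u > 0` (for `d ≥ 1`, `u z = C - |z|²`). Adding a large multiple of `Δ u` to any
configuration makes it allowed, and stabilizing keeps it allowed: this gives a representative in
every class. Stabilizing `η + Δ m` from a stable allowed `η` topples every site exactly `m` times,
so if `η` and `η + Δ k` are both stable and allowed, then `η + Δ k⁺ = (η + Δ k) + Δ k⁻` is
stabilized with toppling vector both `k⁺` and `k⁻`, whence `k = 0`. The same argument shows that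
`Δ` is injective.
-/

open Finset Matrix

namespace Sandpile

variable {ι : Type*}

def IsStable (D : ℤ) (η : ι → ℤ) : Prop := ∀ a, η a ≤ D

def height {n : ℕ} (η : ι → Fin n) : ι → ℤ := fun b => (η b : ℤ) + 1

theorem height_injective {n : ℕ} : Function.Injective (height : (ι → Fin n) → ι → ℤ) :=
  fun η₁ η₂ h => funext fun b => Fin.ext <| by
    have := congrFun h b
    simp only [height] at this
    omega

theorem isStable_height {n : ℕ} (η : ι → Fin n) : IsStable n (height η) := fun b => by
  have := (η b).isLt
  simp only [height]
  omega

theorem exists_height_eq {n : ℕ} {ξ : ι → ℤ} (h : ∀ b, 1 ≤ ξ b ∧ ξ b ≤ n) :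
    ∃ η : ι → Fin n, height η = ξ :=
  ⟨fun b => ⟨(ξ b - 1).toNat, by have := h b; omega⟩,
    funext fun b => by have := h b; simp only [height]; omega⟩

variable [Fintype ι]

structure IsTopplingMatrix (D : ℤ) (Δ : Matrix ι ι ℤ) : Prop where
  isSymm : Δ.IsSymm
  diag : ∀ a, Δ a a = D
  nonpos_of_ne : ∀ ⦃a b⦄, a ≠ b → Δ a b ≤ 0
  sum_row_nonneg : ∀ a, 0 ≤ ∑ b, Δ a b

variable {D : ℤ} {Δ : Matrix ι ι ℤ} {η m n : ι → ℤ}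

theorem IsTopplingMatrix.mulVec_apply_nonpos (hΔ : IsTopplingMatrix D Δ) {a : ι} (hm : 0 ≤ m)
    (ha : m a = 0) : (Δ *ᵥ m) a ≤ 0 := by
  refine sum_nonpos fun b _ => ?_
  rcases eq_or_ne a b with rfl | hab
  · simp [ha]
  · exact mul_nonpos_of_nonpos_of_nonneg (hΔ.nonpos_of_ne hab) (hm b)

variable [DecidableEq ι]

def IsAllowed (Δ : Matrix ι ι ℤ) (η : ι → ℤ) : Prop :=
  ∀ S : Finset ι, S.Nonempty → ∃ a ∈ S, ∑ b ∈ S.erase a, -Δ a b < η a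

/-- `LegalTopplings D Δ η n`: starting from `η`, the sites can be toppled one at a time, each one
holding more than `D` grains when it topples, site `a` toppling `n a` times in all; the
configuration reached is `η - Δ *ᵥ n`. -/
inductive LegalTopplings (D : ℤ) (Δ : Matrix ι ι ℤ) : (ι → ℤ) → (ι → ℤ) → Prop
  | nil (η : ι → ℤ) : LegalTopplings D Δ η 0
  | cons {η n : ι → ℤ} (a : ι) : D < η a →
      LegalTopplings D Δ (η - Δ *ᵥ Pi.single a 1) n → LegalTopplings D Δ η (Pi.single a 1 + n)

theorem sub_mulVec_single_one_apply (η : ι → ℤ) (a b : ι) :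
    (η - Δ *ᵥ Pi.single a 1) b = η b - Δ b a := by
  simp

namespace IsTopplingMatrix

theorem sum_neg_le (hΔ : IsTopplingMatrix D Δ) {a : ι} {T : Finset ι} (ha : a ∉ T) :
    ∑ b ∈ T, -Δ a b ≤ D :=
  calc ∑ b ∈ T, -Δ a b
      ≤ ∑ b ∈ univ.erase a, -Δ a b :=
        sum_le_sum_of_subset_of_nonneg
          (fun b hb => mem_erase.2 ⟨fun h => ha (h ▸ hb), mem_univ b⟩)
          (fun b hb _ => neg_nonneg.2 (hΔ.nonpos_of_ne (ne_of_mem_erase hb).symm))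
    _ = D - ∑ b, Δ a b := by
        rw [sum_neg_distrib, ← add_sum_erase _ _ (mem_univ a), hΔ.diag]; ring
    _ ≤ D := sub_le_self _ (hΔ.sum_row_nonneg a)

theorem nonneg (hΔ : IsTopplingMatrix D Δ) (a : ι) : 0 ≤ D := by
  simpa using hΔ.sum_neg_le (notMem_empty a)

theorem sub_mulVec_single_one_dotProduct (hΔ : IsTopplingMatrix D Δ) (η u : ι → ℤ) (a : ι) :
    (η - Δ *ᵥ Pi.single a 1) ⬝ᵥ u = η ⬝ᵥ u - (Δ *ᵥ u) a := by
  rw [sub_dotProduct, dotProduct_comm (Δ *ᵥ _), dotProduct_mulVec, ← mulVec_transpose,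
    hΔ.isSymm.eq, dotProduct_single_one]

theorem le_sub_mulVec_single_one_apply (hΔ : IsTopplingMatrix D Δ) {L : ℤ} {a : ι} (hL : L ≤ 1)
    (hη : ∀ b, L ≤ η b) (ha : D < η a) (b : ι) : L ≤ (η - Δ *ᵥ Pi.single a 1) b := by
  rw [sub_mulVec_single_one_apply]
  rcases eq_or_ne b a with rfl | hba
  · rw [hΔ.diag]; linarith
  · linarith [hη b, hΔ.nonpos_of_ne hba]

theorem isAllowed_of_forall_lt (hΔ : IsTopplingMatrix D Δ) (h : ∀ a, D < η a) :
    IsAllowed Δ η := fun S ⟨a, ha⟩ =>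
  ⟨a, ha, (hΔ.sum_neg_le (notMem_erase a S)).trans_lt (h a)⟩

end IsTopplingMatrix

namespace LegalTopplings

/-- The least action principle. -/
theorem le_of_isStable (h : LegalTopplings D Δ η n) (hΔ : IsTopplingMatrix D Δ) (hm : 0 ≤ m)
    (hs : IsStable D (η - Δ *ᵥ m)) : n ≤ m := by
  induction h generalizing m with
  | nil => exact hm
  | @cons η n a ha _ ih =>
    have hma : 0 < m a := by
      refine (hm a).lt_of_ne fun h0 => ?_
      have := hs a
      have := hΔ.mulVec_apply_nonpos hm h0.symm
      simp only [Pi.sub_apply] at *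
      linarith
    have hsingle : Pi.single a 1 ≤ m := fun b => by
      rcases eq_or_ne b a with rfl | hba
      · simp only [Pi.single_eq_same]; omega
      · simpa [hba] using hm b
    have := ih (m := m - Pi.single a 1) (sub_nonneg.2 hsingle) (by
      rwa [mulVec_sub, sub_sub_sub_cancel_right])
    exact le_sub_iff_add_le'.1 this

theorem le_sub_mulVec_apply {L : ℤ} (h : LegalTopplings D Δ η n) (hΔ : IsTopplingMatrix D Δ)
    (hL : L ≤ 1) (hη : ∀ b, L ≤ η b) : ∀ b, L ≤ (η - Δ *ᵥ n) b := by
  induction h with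
  | nil => simpa using hη
  | cons a ha _ ih =>
    rw [mulVec_add, ← sub_sub]
    exact ih (hΔ.le_sub_mulVec_single_one_apply hL hη ha)

end LegalTopplings

theorem IsAllowed.sub_mulVec_single_one (hΔ : IsTopplingMatrix D Δ) (hη : IsAllowed Δ η) {a : ι}
    (ha : D < η a) : IsAllowed Δ (η - Δ *ᵥ Pi.single a 1) := by
  intro S hS
  simp only [sub_mulVec_single_one_apply]
  by_cases haS : a ∈ S
  · rcases (S.erase a).eq_empty_or_nonempty with hSa | hSa
    · refine ⟨a, haS, ?_⟩
      rw [hSa, sum_empty, hΔ.diag]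
      linarith
    · obtain ⟨b, hb, hlt⟩ := hη _ hSa
      have hab : a ∈ S.erase b := mem_erase.2 ⟨(ne_of_mem_erase hb).symm, haS⟩
      refine ⟨b, mem_of_mem_erase hb, ?_⟩
      rw [← add_sum_erase _ _ hab, erase_right_comm]
      linarith
  · obtain ⟨b, hb, hlt⟩ := hη S hS
    refine ⟨b, hb, ?_⟩
    linarith [hΔ.nonpos_of_ne (show b ≠ a from fun h => haS (h ▸ hb))]

theorem LegalTopplings.isAllowed (hΔ : IsTopplingMatrix D Δ) (h : LegalTopplings D Δ η n)
    (hη : IsAllowed Δ η) : IsAllowed Δ (η - Δ *ᵥ n) := by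
  induction h with
  | nil => simpa using hη
  | cons a ha _ ih =>
    rw [mulVec_add, ← sub_sub]
    exact ih (hη.sub_mulVec_single_one hΔ ha)

/-- `η ⬝ᵥ u` drops by at least one with every toppling and stays bounded below. -/
theorem IsTopplingMatrix.exists_legalTopplings_isStable (hΔ : IsTopplingMatrix D Δ)
    {u : ι → ℤ} (hu : ∀ b, 0 < u b) (hΔu : ∀ a, 0 < (Δ *ᵥ u) a) (η : ι → ℤ) :
    ∃ n, LegalTopplings D Δ η n ∧ IsStable D (η - Δ *ᵥ n) := by
  obtain ⟨L₀, hL₀⟩ := (Set.finite_range η).bddBelow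
  set L := min L₀ 1
  have hη : ∀ b, L ≤ η b := fun b => (min_le_left _ _).trans (hL₀ ⟨b, rfl⟩)
  have hW : ∀ ζ : ι → ℤ, (∀ b, L ≤ ζ b) → L * ∑ b, u b ≤ ζ ⬝ᵥ u := fun ζ hζ => by
    rw [mul_sum]
    exact sum_le_sum fun b _ => mul_le_mul_of_nonneg_right (hζ b) (hu b).le
  suffices ∀ N : ℕ, ∀ ζ, (∀ b, L ≤ ζ b) → ζ ⬝ᵥ u < L * ∑ b, u b + N →
      ∃ n, LegalTopplings D Δ ζ n ∧ IsStable D (ζ - Δ *ᵥ n) from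
    this (η ⬝ᵥ u - L * ∑ b, u b + 1).toNat η hη (by omega)
  intro N
  induction N with
  | zero => intro ζ hζ hζu; push_cast at hζu; linarith [hW ζ hζ]
  | succ N ih =>
    intro ζ hζ hζu
    by_cases hs : IsStable D ζ
    · exact ⟨0, .nil ζ, by simpa using hs⟩
    obtain ⟨a, ha⟩ : ∃ a, D < ζ a := by simpa [IsStable] using hs
    obtain ⟨n, hn, hns⟩ := ih _ (hΔ.le_sub_mulVec_single_one_apply (min_le_right _ _) hζ ha) (by
      rw [hΔ.sub_mulVec_single_one_dotProduct]; push_cast at hζu; linarith [hΔu a])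
    exact ⟨_, hn.cons a ha, by rwa [mulVec_add, ← sub_sub]⟩

/-- Apply the forbidden-subconfiguration test to the set where `w` is maximal. -/
theorem IsAllowed.exists_lt_add_mulVec (hΔ : IsTopplingMatrix D Δ) (hη : IsAllowed Δ η)
    {w : ι → ℤ} (hw : 0 ≤ w) (hw0 : w ≠ 0) : ∃ a, D < (η + Δ *ᵥ w) a := by
  obtain ⟨c, hc⟩ : ∃ c, w c ≠ 0 := Function.ne_iff.1 hw0
  obtain ⟨e, -, he⟩ := exists_max_image univ w ⟨c, mem_univ c⟩
  set M := w e
  obtain ⟨a, haS, hlt⟩ := hη (univ.filter (w · = M)) ⟨e, by simp [M]⟩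
  have hwa : w a = M := (mem_filter.1 haS).2
  have hM : 1 ≤ M := by have h0 : 0 ≤ w c := hw c; have := he c (mem_univ c); omega
  have hbound : ∑ b, Δ a b * (M - 1 + if w b = M then 1 else 0) ≤ (Δ *ᵥ w) a := by
    refine sum_le_sum fun b _ => ?_
    rcases eq_or_ne a b with rfl | hab
    · simp [hwa]
    · refine mul_le_mul_of_nonpos_left ?_ (hΔ.nonpos_of_ne hab)
      have := he b (mem_univ b)
      split_ifs <;> omega
  have hsplit : ∑ b, Δ a b * (M - 1 + if w b = M then 1 else 0)
      = (M - 1) * ∑ b, Δ a b + (D - ∑ b ∈ (univ.filter (w · = M)).erase a, -Δ a b) := by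
    simp only [mul_add, sum_add_distrib, mul_ite, mul_one, mul_zero, ← sum_filter, ← sum_mul]
    rw [← add_sum_erase _ _ haS, hΔ.diag, sum_neg_distrib]
    ring
  refine ⟨a, ?_⟩
  have := mul_nonneg (sub_nonneg.2 hM) (hΔ.sum_row_nonneg a)
  simp only [Pi.add_apply]
  linarith

theorem LegalTopplings.eq_of_isAllowed (hΔ : IsTopplingMatrix D Δ) (hη : IsAllowed Δ η)
    (hs : IsStable D η) (hm : 0 ≤ m) (h : LegalTopplings D Δ (η + Δ *ᵥ m) n)
    (hst : IsStable D (η + Δ *ᵥ m - Δ *ᵥ n)) : n = m := by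
  have hnm : n ≤ m := h.le_of_isStable hΔ hm (by rwa [add_sub_cancel_right])
  by_contra hne
  obtain ⟨a, ha⟩ := hη.exists_lt_add_mulVec hΔ (sub_nonneg.2 hnm) (sub_ne_zero.2 (Ne.symm hne))
  rw [mulVec_sub, ← add_sub_assoc] at ha
  exact (hst a).not_gt ha

namespace IsTopplingMatrix

theorem eq_zero_of_isAllowed_add_mulVec (hΔ : IsTopplingMatrix D Δ) {u : ι → ℤ}
    (hu : ∀ b, 0 < u b) (hΔu : ∀ a, 0 < (Δ *ᵥ u) a) {k : ι → ℤ}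
    (hη : IsAllowed Δ η) (hs : IsStable D η)
    (hη' : IsAllowed Δ (η + Δ *ᵥ k)) (hs' : IsStable D (η + Δ *ᵥ k)) : k = 0 := by
  obtain ⟨n, hn, hst⟩ := hΔ.exists_legalTopplings_isStable hu hΔu (η + Δ *ᵥ k⁺)
  have hsplit : η + Δ *ᵥ k⁺ = η + Δ *ᵥ k + Δ *ᵥ k⁻ := by
    nth_rw 2 [← posPart_sub_negPart k]
    rw [mulVec_sub]
    abel
  have hpos := hn.eq_of_isAllowed hΔ hη hs (posPart_nonneg k) hst
  rw [hsplit] at hn hst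
  have hneg := hn.eq_of_isAllowed hΔ hη' hs' (negPart_nonneg k) hst
  rw [← posPart_sub_negPart k, ← hpos, ← hneg, sub_self]

theorem exists_isAllowed_add_mulVec (hΔ : IsTopplingMatrix D Δ) {u : ι → ℤ}
    (hu : ∀ b, 0 < u b) (hΔu : ∀ a, 0 < (Δ *ᵥ u) a) (ζ : ι → ℤ) :
    ∃ k, IsAllowed Δ (ζ + Δ *ᵥ k) ∧ ∀ b, 1 ≤ (ζ + Δ *ᵥ k) b ∧ (ζ + Δ *ᵥ k) b ≤ D := by
  set t := ∑ b, |D + 1 - ζ b|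
  have hbig : ∀ b, D < (ζ + Δ *ᵥ (t • u)) b := fun b => by
    have h1 : D + 1 - ζ b ≤ t :=
      (le_abs_self _).trans (single_le_sum (fun c _ => abs_nonneg (D + 1 - ζ c)) (mem_univ b))
    have h2 : t ≤ t * (Δ *ᵥ u) b :=
      le_mul_of_one_le_right (sum_nonneg fun c _ => abs_nonneg _) (hΔu b)
    simp only [Pi.add_apply, mulVec_smul, Pi.smul_apply, smul_eq_mul]
    linarith
  obtain ⟨n, hn, hst⟩ := hΔ.exists_legalTopplings_isStable hu hΔu (ζ + Δ *ᵥ (t • u))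
  refine ⟨t • u - n, ?_⟩
  rw [mulVec_sub, ← add_sub_assoc]
  refine ⟨hn.isAllowed hΔ (hΔ.isAllowed_of_forall_lt hbig), fun b => ⟨?_, hst b⟩⟩
  exact hn.le_sub_mulVec_apply hΔ le_rfl (fun c => by linarith [hbig c, hΔ.nonneg c]) b

theorem mulVec_injective (hΔ : IsTopplingMatrix D Δ) {u : ι → ℤ}
    (hu : ∀ b, 0 < u b) (hΔu : ∀ a, 0 < (Δ *ᵥ u) a) :
    Function.Injective Δ.mulVec := by
  intro k₁ k₂ h
  obtain ⟨k, hk, hb⟩ := hΔ.exists_isAllowed_add_mulVec hu hΔu 0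
  have hs : IsStable D (0 + Δ *ᵥ k) := fun b => (hb b).2
  have hsame : 0 + Δ *ᵥ k + Δ *ᵥ (k₁ - k₂) = 0 + Δ *ᵥ k := by
    rw [mulVec_sub, h, sub_self, add_zero]
  exact sub_eq_zero.1 (hΔ.eq_zero_of_isAllowed_add_mulVec hu hΔu hk hs (by rwa [hsame])
    (by rwa [hsame]))


/-- By Gershgorin's theorem every eigenvalue `μ` of `Δ` satisfies `|μ - D| ≤ D`. -/
theorem det_nonneg (hΔ : IsTopplingMatrix D Δ) : 0 ≤ Δ.det := by
  set A : Matrix ι ι ℝ := Δ.map (Int.cast : ℤ → ℝ)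
  have hAij : ∀ i j, A i j = Δ i j := fun _ _ => rfl
  have hA : A.IsHermitian := IsHermitian.map hΔ.isSymm Int.cast (congrFun rfl)
  rw [← Int.cast_nonneg_iff (R := ℝ), ← eq_intCast (Int.castRingHom ℝ),
    (Int.castRingHom ℝ).map_det]
  change 0 ≤ A.det
  rw [hA.det_eq_prod_eigenvalues]
  refine prod_nonneg fun i _ => ?_
  obtain ⟨k, hk⟩ := eigenvalue_mem_ball (Module.End.hasEigenvalue_iff_mem_spectrum.2
    ((spectrum_toLin' A).symm ▸ hA.eigenvalues_mem_spectrum_real i))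
  have hR : ∑ j ∈ univ.erase k, ‖A k j‖ = ((∑ j ∈ univ.erase k, -Δ k j : ℤ) : ℝ) := by
    push_cast
    refine sum_congr rfl fun j hj => ?_
    rw [Real.norm_eq_abs, hAij, abs_of_nonpos
      (by exact_mod_cast hΔ.nonpos_of_ne (ne_of_mem_erase hj).symm)]
  rw [Metric.mem_closedBall, Real.dist_eq, hR, hAij, hΔ.diag] at hk
  have : ((∑ j ∈ univ.erase k, -Δ k j : ℤ) : ℝ) ≤ D := by
    exact_mod_cast hΔ.sum_neg_le (notMem_erase k univ)
  simp only [RCLike.ofReal_real_eq_id, id]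
  linarith [neg_abs_le (hA.eigenvalues i - D)]

theorem bijective_mk_height {n : ℕ} (hΔ : IsTopplingMatrix n Δ) {u : ι → ℤ}
    (hu : ∀ b, 0 < u b) (hΔu : ∀ a, 0 < (Δ *ᵥ u) a) :
    Function.Bijective fun η : {η : ι → Fin n // IsAllowed Δ (height η)} =>
      Submodule.Quotient.mk (p := LinearMap.range (toLin' Δ)) (height η.1) := by
  constructor
  · rintro ⟨η₁, h₁⟩ ⟨η₂, h₂⟩ h
    obtain ⟨k, hk⟩ := LinearMap.mem_range.1 ((Submodule.Quotient.eq _).1 h)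
    rw [toLin'_apply] at hk
    have hη₁ : height η₂ + Δ *ᵥ k = height η₁ := by rw [hk, add_sub_cancel]
    have hk0 := hΔ.eq_zero_of_isAllowed_add_mulVec hu hΔu h₂ (isStable_height η₂)
      (hη₁ ▸ h₁) (hη₁ ▸ isStable_height η₁)
    rw [hk0, mulVec_zero, add_zero] at hη₁
    exact Subtype.ext (height_injective hη₁.symm)
  · intro q
    obtain ⟨ζ, rfl⟩ := Submodule.Quotient.mk_surjective _ q
    obtain ⟨k, hk, hb⟩ := hΔ.exists_isAllowed_add_mulVec hu hΔu ζ
    obtain ⟨η, hη⟩ := exists_height_eq hb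
    refine ⟨⟨η, hη ▸ hk⟩, (Submodule.Quotient.eq _).2 (LinearMap.mem_range.2 ⟨k, ?_⟩)⟩
    rw [hη, toLin'_apply, add_sub_cancel_left]

theorem card_eq_det {n : ℕ} (hΔ : IsTopplingMatrix n Δ) {u : ι → ℤ}
    (hu : ∀ b, 0 < u b) (hΔu : ∀ a, 0 < (Δ *ᵥ u) a) :
    (Nat.card {η : ι → Fin n // IsAllowed Δ (height η)} : ℤ) = Δ.det := by
  have hinj : Function.Injective (toLin' Δ) := hΔ.mulVec_injective hu hΔu
  have hcomp : (LinearMap.range (toLin' Δ)).subtype ∘ₗ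
      (LinearEquiv.ofInjective _ hinj : (ι → ℤ) →+ _).toIntLinearMap = toLin' Δ := by
    ext; rfl
  rw [Nat.card_eq_of_bijective _ (hΔ.bijective_mk_height hu hΔu),
    ← Submodule.natAbs_det_equiv _ (LinearEquiv.ofInjective _ hinj), hcomp,
    LinearMap.det_toLin', Int.natAbs_of_nonneg hΔ.det_nonneg]

end IsTopplingMatrix

end Sandpile

section Lattice

open Sandpile

variable {d : ℕ}

theorem adjacent_comm {x y : Site d} : adjacent x y ↔ adjacent y x := by
  simp only [adjacent, abs_sub_comm]

theorem lap_comm (x y : Site d) : lap d x y = lap d y x := by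
  simp only [lap, eq_comm (a := x), adjacent_comm (x := x)]

theorem lap_of_ne {x y : Site d} (h : x ≠ y) : lap d x y = if adjacent x y then -1 else 0 :=
  if_neg h

def neighbor (x : Site d) (p : Fin d × Bool) : Site d :=
  x + Pi.single p.1 (if p.2 then 1 else -1)

theorem exists_neighbor_eq {x y : Site d} (h : adjacent x y) : ∃ p, neighbor x p = y := by
  obtain ⟨i, hi⟩ : ∃ i, x i ≠ y i := by
    by_contra! hxy
    simp [adjacent, hxy] at h
  have hsplit := add_sum_erase univ (fun j => |x j - y j|) (mem_univ i)
  have hrest := sum_nonneg fun j (_ : j ∈ univ.erase i) => abs_nonneg (x j - y j)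
  have hxi : |x i - y i| = 1 := by
    have := abs_pos.2 (sub_ne_zero.2 hi)
    rw [adjacent] at h
    omega
  have hother : ∀ j ∈ univ.erase i, |x j - y j| = 0 := by
    rw [← sum_eq_zero_iff_of_nonneg fun j _ => abs_nonneg _]
    rw [adjacent] at h
    omega
  refine ⟨(i, decide (y i = x i + 1)), funext fun j => ?_⟩
  rcases eq_or_ne j i with rfl | hji
  · rcases abs_eq (zero_le_one' ℤ) |>.1 hxi with h' | h' <;>
      simp [neighbor] <;> omega
  · simpa [neighbor, Pi.single_eq_of_ne hji, sub_eq_zero] using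
      hother j (mem_erase.2 ⟨hji, mem_univ j⟩)

/-- A site has at most `2 d` neighbours, each contributing `-1` to its row of `Δ`. -/
theorem sum_neg_lap_mul_le {x : Site d} {T : Finset (Site d)} (hx : x ∉ T) {f : Site d → ℤ}
    (hf : ∀ p, 0 ≤ f (neighbor x p)) : ∑ y ∈ T, -lap d x y * f y ≤ ∑ p, f (neighbor x p) := by
  have hf' : ∀ y ∈ univ.image (neighbor x), 0 ≤ f y := by
    simp only [mem_image, mem_univ, true_and, forall_exists_index]
    rintro _ p rfl
    exact hf p
  calc ∑ y ∈ T, -lap d x y * f y = ∑ y ∈ T.filter (adjacent x), f y := by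
        rw [sum_filter]
        refine sum_congr rfl fun y hy => ?_
        rw [lap_of_ne (by rintro rfl; exact hx hy)]
        split_ifs <;> simp
    _ ≤ ∑ y ∈ univ.image (neighbor x), f y := by
        refine sum_le_sum_of_subset_of_nonneg (fun y hy => ?_) (fun y hy _ => hf' y hy)
        obtain ⟨p, rfl⟩ := exists_neighbor_eq (mem_filter.1 hy).2
        exact mem_image_of_mem _ (mem_univ p)
    _ ≤ ∑ p, f (neighbor x p) := sum_image_le_of_nonneg hf'

theorem lapMat_mulVec_apply (V : Finset (Site d)) (u : Site d → ℤ) (a : {x // x ∈ V}) :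
    (lapMat V *ᵥ fun b => u b) a = 2 * d * u a + ∑ y ∈ V.erase a, lap d a y * u y := by
  change ∑ b : {x // x ∈ V}, lap d a b * u b = _
  rw [sum_coe_sort V (fun y => lap d a y * u y), ← add_sum_erase _ _ a.2]
  simp [lap]

theorem isTopplingMatrix_lapMat (V : Finset (Site d)) :
    IsTopplingMatrix (2 * d : ℕ) (lapMat V) where
  isSymm := IsSymm.ext fun a b => lap_comm b.1 a.1
  diag a := by simp [lapMat, lap]
  nonpos_of_ne a b h := by
    rw [lapMat, lap_of_ne (Subtype.val_injective.ne h)]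
    split_ifs <;> simp
  sum_row_nonneg a := by
    have hrow := lapMat_mulVec_apply V 1 a
    have hnbr := sum_neg_lap_mul_le (notMem_erase a.1 V) (f := 1) fun _ => zero_le_one
    simp only [mulVec, dotProduct, Pi.one_apply, mul_one, sum_neg_distrib, sum_const, card_univ,
      Fintype.card_prod, Fintype.card_fin, Fintype.card_bool, nsmul_eq_mul, mul_one] at hrow hnbr
    push_cast at hnbr
    linarith

theorem dotProduct_self_neighbor (x : Site d) (p : Fin d × Bool) :
    neighbor x p ⬝ᵥ neighbor x p = x ⬝ᵥ x + 2 * (if p.2 then 1 else -1) * x p.1 + 1 := by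
  simp only [neighbor, add_dotProduct, dotProduct_add, dotProduct_single, single_dotProduct,
    Pi.add_apply, Pi.single_eq_same]
  split_ifs <;> ring

theorem sum_dotProduct_self_neighbor (x : Site d) :
    ∑ p, neighbor x p ⬝ᵥ neighbor x p = 2 * d * (x ⬝ᵥ x + 1) := by
  simp only [dotProduct_self_neighbor, Fintype.sum_prod_type, Fintype.sum_bool, if_true,
    Bool.false_eq_true, if_false]
  trans ∑ _ : Fin d, 2 * (x ⬝ᵥ x + 1)
  · exact sum_congr rfl fun i _ => by ring
  · simp only [sum_const, card_univ, Fintype.card_fin, nsmul_eq_mul]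
    ring

theorem dotProduct_self_neighbor_le (x : Site d) (p : Fin d × Bool) :
    neighbor x p ⬝ᵥ neighbor x p ≤ 2 * (x ⬝ᵥ x) + 2 := by
  have hsq : x p.1 * x p.1 ≤ x ⬝ᵥ x :=
    single_le_sum (f := fun i => x i * x i) (fun i _ => mul_self_nonneg (x i)) (mem_univ p.1)
  rw [dotProduct_self_neighbor]
  split_ifs <;> nlinarith [sq_nonneg (x p.1 - 1), sq_nonneg (x p.1 + 1)]

/-- The potential `C - |z|²`, with `C` large on `V` and its neighbours: the lattice Laplacian of
`|z|²` is `2 d` everywhere. -/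
theorem exists_lapMat_mulVec_pos (hd : 0 < d) (V : Finset (Site d)) :
    ∃ u : {x // x ∈ V} → ℤ, (∀ b, 0 < u b) ∧ ∀ a, 0 < (lapMat V *ᵥ u) a := by
  set B := ∑ x ∈ V, x ⬝ᵥ x
  have hB : ∀ x ∈ V, x ⬝ᵥ x ≤ B := fun x hx =>
    single_le_sum (fun y _ => sum_nonneg fun i _ => mul_self_nonneg (y i)) hx
  set U : Site d → ℤ := fun z => 2 * B + 2 - z ⬝ᵥ z
  refine ⟨fun b => U b, fun b => ?_, fun a => ?_⟩
  · have := hB b b.2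
    have : 0 ≤ (b : Site d) ⬝ᵥ b := sum_nonneg fun i _ => mul_self_nonneg _
    simp only [U]
    linarith
  · have hU : ∀ p, 0 ≤ U (neighbor a p) := fun p => by
      have := dotProduct_self_neighbor_le a.1 p
      have := hB a a.2
      simp only [U]
      linarith
    have hsum := sum_neg_lap_mul_le (notMem_erase a.1 V) hU
    have hUsum : ∑ p, U (neighbor a p) = 2 * d * (2 * B + 2) - 2 * d * (a.1 ⬝ᵥ a.1 + 1) := by
      simp only [U, sum_sub_distrib, sum_dotProduct_self_neighbor, sum_const, card_univ,
        Fintype.card_prod, Fintype.card_fin, Fintype.card_bool, nsmul_eq_mul]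
      push_cast
      ring
    rw [lapMat_mulVec_apply]
    simp only [neg_mul, sum_neg_distrib] at hsum
    have : (0 : ℤ) < d := by exact_mod_cast hd
    simp only [U] at hUsum ⊢
    linarith

theorem recurrentOn_iff_isAllowed (V : Finset (Site d)) (η : {x // x ∈ V} → Fin (2 * d)) :
    RecurrentOn V η ↔ IsAllowed (lapMat V) (height η) := by
  simp only [RecurrentOn, IsAllowed, not_le, sum_neg_distrib]
  rfl

end Lattice

/-- the number of recurrent configurations of the Abelian sandpile model on a
finite set `V ⊂ ℤ^d` equals `det (Δ_V)`. -/
theorem card_recurrent_eq_det {d : ℕ} (V : Finset (Site d)) :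
    (Nat.card {η : {x // x ∈ V} → Fin (2 * d) // RecurrentOn V η} : ℤ)
      = (lapMat V).det := by
  rw [Nat.card_congr (Equiv.subtypeEquivRight (recurrentOn_iff_isAllowed V))]
  rcases Nat.eq_zero_or_pos d with rfl | hd
  · rcases V.eq_empty_or_nonempty with rfl | ⟨x, hx⟩
    · exact (isTopplingMatrix_lapMat ∅).card_eq_det (u := 0)
        (fun b => (notMem_empty _ b.2).elim) (fun b => (notMem_empty _ b.2).elim)
    · have : Nonempty {x // x ∈ V} := ⟨⟨x, hx⟩⟩
      have : IsEmpty ({x // x ∈ V} → Fin (2 * 0)) := ⟨fun η => (η ⟨x, hx⟩).elim0⟩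
      have hΔ : lapMat V = 0 := by ext a b; simp [lapMat, lap, Subsingleton.elim a.1 b.1]
      rw [Nat.card_of_isEmpty, hΔ, det_zero, Nat.cast_zero]
  obtain ⟨u, hu, hΔu⟩ := exists_lapMat_mulVec_pos hd V
  exact (isTopplingMatrix_lapMat V).card_eq_det hu hΔu
end

section
/- Let d ≥ 3. There is a constant C(d) > 0 such that for every finite V ⊂ Z^d containing 0, |R_{V∖{0}}| / |R_V| ≤ C(d); equivalently, det(Δ_{V∖{0}}) / det(Δ_V) ≤ C(d) uniformly in V. -/
/- The Abelian sandpile model on ℤ^d.  Sites are `Fin d → ℤ`; the toppling matrix is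
`Δ_{xx} = 2d`, `Δ_{xy} = -1` for nearest neighbours, `0` otherwise.  Toppling in volume `V`
uses the matrix restricted to `V` (grains leaving `V` disappear).  `LegalSeq V η l η'`
says that `l` is a sequence of legal topplings in `V` taking `η` to `η'`. -/

open scoped Classical

/-- The toppling matrix restricted to `V`, over `ℝ`. -/
noncomputable def lapMatR {d : ℕ} (V : Finset (Site d)) :
    Matrix {x // x ∈ V} {x // x ∈ V} ℝ := fun a b => ((lap d a.1 b.1 : ℤ) : ℝ)

/-
Write `Δ_V` with the origin as first index. The Schur complement formula gives
`det Δ_V = det Δ_{V∖{0}} · ⟪x, Δ_V x⟫` for a vector `x` with `x 0 = 1`, and `⟪x, Δ_V x⟫` is the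
Dirichlet energy of `x` extended by zero to `ℤ^d`. That energy is at least `1/4`: the octant
`ℕ³ × {0}` carries an explicit unit flow `θ` from `0` to infinity whose energy is at most `4`
(level `n` has `O(n²)` sites, each carrying energy `O(1/n⁴)`; this summability is where
`d ≥ 3` enters), and summation by parts with Cauchy–Schwarz gives
`1 = x 0 = ⟪θ, ∇x⟫ ≤ ‖θ‖ ‖∇x‖`. Hence `C = 4` works.
-/

open Matrix Finset

theorem Matrix.exists_det_eq_det_submatrix_ne_mul_dotProduct {R ι : Type*} [CommRing R]
    [Fintype ι] [DecidableEq ι] (A : Matrix ι ι R) (i : ι)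
    (h : IsUnit (A.submatrix (Subtype.val : {j // j ≠ i} → ι) Subtype.val).det) :
    ∃ x : ι → R, x i = 1 ∧
      A.det = (A.submatrix (Subtype.val : {j // j ≠ i} → ι) Subtype.val).det * (x ⬝ᵥ A *ᵥ x) := by
  set e := Equiv.sumCompl (· = i)
  set D := A.submatrix (Subtype.val : {j // j ≠ i} → ι) Subtype.val
  have : Invertible D := D.invertibleOfIsUnitDet h
  set a := (A.submatrix e e).toBlocks₁₁
  set b := (A.submatrix e e).toBlocks₁₂
  set c := (A.submatrix e e).toBlocks₂₁
  have hA : A.submatrix e e = fromBlocks a b c D := (fromBlocks_toBlocks _).symm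
  set y := -(⅟D *ᵥ c *ᵥ fun _ => 1)
  set x : {j // j = i} ⊕ {j // ¬ j = i} → R := Sum.elim (fun _ => 1) y
  refine ⟨x ∘ e.symm, by simp [x, e, Equiv.sumCompl], ?_⟩
  -- `y` makes the lower block of `A x` vanish, so `x ⬝ᵥ A x` is the Schur complement
  have hDy : c *ᵥ (fun _ => 1) + D *ᵥ y = 0 := by
    simp [y, mulVec_neg, mulVec_mulVec]
  rw [← det_submatrix_equiv_self e A, ← dotProduct_comp_equiv_symm, ← submatrix_mulVec_equiv,
    Equiv.symm_symm, hA, det_fromBlocks₂₂, fromBlocks_mulVec, det_unique (a - _)]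
  simp only [x, Sum.elim_comp_inl, Sum.elim_comp_inr, sumElim_dotProduct_sumElim, hDy,
    dotProduct_zero, add_zero]
  congr 1
  simp [y, mulVec_neg, mulVec_mulVec, Matrix.mul_assoc, dotProduct, mulVec, sub_eq_add_neg]

theorem Finset.sum_comp_add_right_of_support {G M : Type*} [AddGroup G] [AddCommMonoid M]
    (S : Finset G) (f : G → M) (t : G) (h : ∀ q, f q ≠ 0 → q ∈ S ∧ q - t ∈ S) :
    ∑ p ∈ S, f (p + t) = ∑ p ∈ S, f p :=
  sum_bij_ne_zero (fun p _ _ => p + t) (fun p _ hp => (h _ hp).1)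
    (fun _ _ _ _ _ _ hpq => add_right_cancel hpq)
    (fun q _ hq => ⟨q - t, (h q hq).2, by simpa using hq, sub_add_cancel q t⟩)
    (fun _ _ _ => rfl)

namespace Sandpile

variable {d : ℕ}

lemma adjacent_iff_exists_single {x y : Site d} :
    adjacent x y ↔ ∃ i, y = x + Pi.single i 1 ∨ y = x - Pi.single i 1 := by
  constructor
  · intro h
    unfold adjacent at h
    obtain ⟨i, hi⟩ : ∃ i, x i ≠ y i := by
      by_contra! hxy
      simp [hxy] at h
    have hrest : ∀ j ≠ i, y j = x j := fun j hj => by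
      have := sum_le_sum_of_subset_of_nonneg (subset_univ {i, j})
        fun k _ _ => abs_nonneg (x k - y k)
      rw [sum_pair hj.symm, h] at this
      have := abs_pos.2 (sub_ne_zero.2 hi)
      have := abs_nonneg (x j - y j)
      have : |x j - y j| = 0 := by omega
      simpa [sub_eq_zero, eq_comm] using this
    have hi1 : |x i - y i| ≤ 1 :=
      h ▸ single_le_sum (fun k _ => abs_nonneg (x k - y k)) (mem_univ i)
    refine ⟨i, ?_⟩
    rcases abs_le.1 hi1 with ⟨h1, h2⟩
    have : y i = x i + 1 ∨ y i = x i - 1 := by omega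
    refine this.imp (fun hy => ?_) (fun hy => ?_) <;> ext j <;> by_cases hj : j = i <;>
      simp [hj, hy, hrest]
  · rintro ⟨i, rfl | rfl⟩ <;> simp [adjacent, Pi.single_apply, apply_ite]

lemma adjacent_comm {x y : Site d} : adjacent x y ↔ adjacent y x := by
  simp only [adjacent, abs_sub_comm]

lemma lap_comm (x y : Site d) : lap d x y = lap d y x := by
  simp only [lap, eq_comm (a := x), adjacent_comm (x := x)]

def nbr (p : Site d) (s : Fin d × Bool) : Site d :=
  if s.2 then p + Pi.single s.1 1 else p - Pi.single s.1 1

lemma nbr_apply (p : Site d) (s : Fin d × Bool) (j : Fin d) :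
    nbr p s j = p j + if j = s.1 then (if s.2 then 1 else -1) else 0 := by
  obtain ⟨i, _ | _⟩ := s <;> by_cases j = i <;> simp [nbr, *, sub_eq_add_neg]

lemma nbr_injective (p : Site d) : Function.Injective (nbr p) := by
  rintro ⟨i, b⟩ ⟨j, c⟩ h
  have := congrFun h i
  simp only [nbr_apply] at this
  by_cases hij : i = j <;> cases b <;> cases c <;> simp_all

lemma nbr_ne_self (p : Site d) (s : Fin d × Bool) : nbr p s ≠ p := fun h => by
  have := congrFun h s.1
  rw [nbr_apply] at this
  split_ifs at this <;> simp_all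

lemma adjacent_iff_exists_nbr {p q : Site d} : adjacent p q ↔ ∃ s, nbr p s = q := by
  rw [adjacent_iff_exists_single]
  constructor
  · rintro ⟨i, h | h⟩
    exacts [⟨(i, true), h.symm⟩, ⟨(i, false), h.symm⟩]
  · rintro ⟨⟨i, _ | _⟩, rfl⟩
    exacts [⟨i, Or.inr rfl⟩, ⟨i, Or.inl rfl⟩]

lemma sum_nbr {M : Type*} [AddCommMonoid M] (f : Site d → M) (p : Site d) :
    ∑ s, f (nbr p s) = ∑ i, (f (p + Pi.single i 1) + f (p - Pi.single i 1)) := by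
  simp [Fintype.sum_prod_type, nbr]

noncomputable def gridLap (X : Site d → ℝ) (p : Site d) : ℝ :=
  2 * d * X p - ∑ i, (X (p + Pi.single i 1) + X (p - Pi.single i 1))

lemma sum_lap_mul_eq_gridLap {V : Finset (Site d)} {X : Site d → ℝ} (hX : ∀ q ∉ V, X q = 0)
    (p : Site d) : ∑ q ∈ V, (lap d p q : ℝ) * X q = gridLap X p := by
  set N := insert p (univ.image (nbr p))
  have hpN : p ∉ univ.image (nbr p) := by simpa using fun s => nbr_ne_self p s
  have hlap : ∀ q ∉ N, lap d p q = 0 := fun q hq => by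
    simp only [N, mem_insert, mem_image, mem_univ, true_and, not_or] at hq
    rw [lap, if_neg (Ne.symm hq.1), if_neg (by simpa [adjacent_iff_exists_nbr] using hq.2)]
  calc ∑ q ∈ V, (lap d p q : ℝ) * X q = ∑ q ∈ V ∪ N, (lap d p q : ℝ) * X q :=
        sum_subset subset_union_left fun q _ hq => by rw [hX q hq, mul_zero]
    _ = ∑ q ∈ N, (lap d p q : ℝ) * X q :=
        (sum_subset subset_union_right fun q _ hq => by
          rw [hlap q hq, Int.cast_zero, zero_mul]).symm
    _ = gridLap X p := by
        rw [sum_insert hpN, sum_image fun _ _ _ _ h => nbr_injective p h, gridLap, ← sum_nbr]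
        simp [lap, adjacent_iff_exists_nbr, (nbr_ne_self p _).symm, sub_eq_add_neg]

noncomputable def zeroExt (V : Finset (Site d)) (v : V → ℝ) (p : Site d) : ℝ :=
  if h : p ∈ V then v ⟨p, h⟩ else 0

lemma zeroExt_of_notMem {V : Finset (Site d)} (v : V → ℝ) {p : Site d} (h : p ∉ V) :
    zeroExt V v p = 0 := dif_neg h

lemma mem_of_zeroExt_ne_zero {V : Finset (Site d)} {v : V → ℝ} {p : Site d}
    (h : zeroExt V v p ≠ 0) : p ∈ V := by
  by_contra hp; exact h (dif_neg hp)

@[simp] lemma zeroExt_coe (V : Finset (Site d)) (v : V → ℝ) (a : V) : zeroExt V v a = v a :=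
  dif_pos a.2

def backClosure (V : Finset (Site d)) : Finset (Site d) :=
  V ∪ univ.biUnion fun i => V.image (· - Pi.single i 1)

lemma subset_backClosure (V : Finset (Site d)) : V ⊆ backClosure V := subset_union_left

lemma sub_single_mem_backClosure {V : Finset (Site d)} {p : Site d} (hp : p ∈ V) (i : Fin d) :
    p - Pi.single i 1 ∈ backClosure V :=
  mem_union_right _ (mem_biUnion.2 ⟨i, mem_univ i, mem_image_of_mem _ hp⟩)

lemma mem_backClosure_of_zeroExt_ne_zero (V : Finset (Site d)) (v : V → ℝ) (p : Site d)
    (hp : zeroExt V v p ≠ 0) :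
    p ∈ backClosure V ∧ ∀ i, p - Pi.single i 1 ∈ backClosure V :=
  ⟨subset_backClosure V (mem_of_zeroExt_ne_zero hp),
    sub_single_mem_backClosure (mem_of_zeroExt_ne_zero hp)⟩

/-- Summation by parts: the inner sum on the right is the divergence of the edge field `θ`. -/
theorem sum_mul_sub_shift_eq (θ : Site d → Fin d → ℝ) (X : Site d → ℝ) (S : Finset (Site d))
    (hS : ∀ p, X p ≠ 0 → p ∈ S ∧ ∀ i, p - Pi.single i 1 ∈ S) :
    ∑ p ∈ S, ∑ i, θ p i * (X p - X (p + Pi.single i 1)) =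
      ∑ p ∈ S, X p * ∑ i, (θ p i - θ (p - Pi.single i 1) i) := by
  have hshift : ∀ i, ∑ p ∈ S, θ p i * X (p + Pi.single i 1) =
      ∑ p ∈ S, θ (p - Pi.single i 1) i * X p := fun i => by
    have := sum_comp_add_right_of_support S (fun q => θ (q - Pi.single i 1) i * X q)
      (Pi.single i 1) fun q hq => ⟨(hS q (right_ne_zero_of_mul hq)).1,
        (hS q (right_ne_zero_of_mul hq)).2 i⟩
    simpa only [add_sub_cancel_right] using this
  have hswap : ∑ p ∈ S, ∑ i, θ p i * X (p + Pi.single i 1) =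
      ∑ p ∈ S, ∑ i, X p * θ (p - Pi.single i 1) i := by
    rw [sum_comm]
    conv_rhs => rw [sum_comm]
    exact sum_congr rfl fun i _ => (hshift i).trans (by simp only [mul_comm])
  simp only [mul_sub, mul_sum, sum_sub_distrib, hswap, mul_comm]

lemma dotProduct_lapMatR_mulVec_eq_sum (V : Finset (Site d)) (v : V → ℝ) :
    v ⬝ᵥ lapMatR V *ᵥ v = ∑ p ∈ V, zeroExt V v p * gridLap (zeroExt V v) p := by
  rw [← sum_coe_sort V]
  refine sum_congr rfl fun a _ => ?_
  rw [zeroExt_coe, ← sum_lap_mul_eq_gridLap (V := V) (fun q => zeroExt_of_notMem v),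
    ← sum_coe_sort V]
  simp [mulVec, dotProduct, lapMatR]

theorem dotProduct_lapMatR_mulVec (V : Finset (Site d)) (v : V → ℝ) :
    v ⬝ᵥ lapMatR V *ᵥ v =
      ∑ p ∈ backClosure V, ∑ i, (zeroExt V v p - zeroExt V v (p + Pi.single i 1)) ^ 2 := by
  simp only [sq]
  rw [sum_mul_sub_shift_eq _ _ _ (mem_backClosure_of_zeroExt_ne_zero V v),
    dotProduct_lapMatR_mulVec_eq_sum,
    ← sum_subset (subset_backClosure V) fun p _ hp => by rw [zeroExt_of_notMem v hp, zero_mul]]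
  refine sum_congr rfl fun p _ => ?_
  congr 1
  rw [gridLap, sub_eq_iff_eq_add, ← sum_add_distrib]
  simp only [sub_add_cancel, show ∀ a b c : ℝ, a - b - (c - a) + (b + c) = 2 * a by intros; ring,
    sum_const, card_univ, Fintype.card_fin, nsmul_eq_mul]
  ring

theorem lapMatR_posDef (hd : 0 < d) (V : Finset (Site d)) : (lapMatR V).PosDef := by
  refine posDef_iff_dotProduct_mulVec.2 ⟨?_, fun v hv => ?_⟩
  · ext a b
    simp [lapMatR, lap_comm]
  set X := zeroExt V v
  rw [star_trivial, dotProduct_lapMatR_mulVec]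
  refine (sum_nonneg fun p _ => sum_nonneg fun i _ => sq_nonneg _).lt_of_ne fun h => ?_
  set i₀ : Fin d := ⟨0, hd⟩
  -- zero energy makes `X` invariant under `e_{i₀}`, so its support has no maximal `i₀`-coordinate
  have hshift : ∀ p ∈ V, X (p + Pi.single i₀ 1) = X p := fun p hp => by
    have := (sum_eq_zero_iff_of_nonneg fun p _ => sum_nonneg fun i _ => sq_nonneg _).1 h.symm p
      (subset_backClosure V hp)
    have := (sum_eq_zero_iff_of_nonneg fun i _ => sq_nonneg _).1 this i₀ (mem_univ _)
    linarith [pow_eq_zero_iff (n := 2) two_ne_zero |>.1 this]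
  obtain ⟨a, ha⟩ := Function.ne_iff.1 hv
  obtain ⟨p, hp, hmax⟩ := (V.filter (X · ≠ 0)).exists_max_image (· i₀)
    ⟨a, mem_filter.2 ⟨a.2, by simpa [X] using ha⟩⟩
  rw [mem_filter] at hp
  have hp' : p + Pi.single i₀ 1 ∈ V.filter (X · ≠ 0) := by
    rw [mem_filter, hshift p hp.1]
    exact ⟨mem_of_zeroExt_ne_zero (hshift p hp.1 ▸ hp.2), hp.2⟩
  have := hmax _ hp'
  simp at this

theorem lapMatR_det_pos (hd : 0 < d) (V : Finset (Site d)) : 0 < (lapMatR V).det :=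
  (lapMatR_posDef hd V).det_pos

lemma sum_ite_lt_three (hd : 3 ≤ d) {M : Type*} [AddCommMonoid M] (f : Fin d → M) :
    ∑ i : Fin d, (if (i : ℕ) < 3 then f i else 0) =
      f ⟨0, by omega⟩ + f ⟨1, by omega⟩ + f ⟨2, by omega⟩ := by
  have : univ.filter (fun i : Fin d => (i : ℕ) < 3) =
      {⟨0, by omega⟩, ⟨1, by omega⟩, ⟨2, by omega⟩} := by
    ext i
    simp only [mem_filter, mem_univ, true_and, mem_insert, mem_singleton, Fin.ext_iff]
    omega
  rw [← sum_filter, this, sum_insert (by simp [Fin.ext_iff]), sum_insert (by simp [Fin.ext_iff]),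
    sum_singleton, add_assoc]

def InOctant (p : Site d) : Prop := (∀ i, 0 ≤ p i) ∧ ∀ i : Fin d, 3 ≤ (i : ℕ) → p i = 0

def level (p : Site d) : ℤ := ∑ i, p i

lemma InOctant.level_nonneg {p : Site d} (hp : InOctant p) : 0 ≤ level p :=
  sum_nonneg fun i _ => hp.1 i

lemma InOctant.eq_zero_iff {p : Site d} (hp : InOctant p) : p = 0 ↔ level p = 0 := by
  refine ⟨fun h => by simp [h, level], fun h => funext fun i => ?_⟩
  exact (sum_eq_zero_iff_of_nonneg fun i _ => hp.1 i).1 h i (mem_univ i)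

lemma InOctant.level_eq (hd : 3 ≤ d) {p : Site d} (hp : InOctant p) :
    level p = p ⟨0, by omega⟩ + p ⟨1, by omega⟩ + p ⟨2, by omega⟩ := by
  rw [level, ← sum_ite_lt_three hd]
  refine sum_congr rfl fun i _ => ?_
  split_ifs with hi
  · rfl
  · exact hp.2 i (by omega)

lemma InOctant.sum_ite_lt_three (hd : 3 ≤ d) {p : Site d} (hp : InOctant p) (a : ℝ) :
    ∑ i : Fin d, (if (i : ℕ) < 3 then (p i : ℝ) + a else 0) = level p + 3 * a := by
  rw [Sandpile.sum_ite_lt_three hd, hp.level_eq hd]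
  push_cast
  ring

lemma inOctant_zero : InOctant (0 : Site d) := ⟨fun _ => le_rfl, fun _ _ => rfl⟩

lemma level_sub_single (p : Site d) (i : Fin d) : level (p - Pi.single i 1) = level p - 1 := by
  simp [level, sum_sub_distrib]

lemma inOctant_sub_single_iff {p : Site d} {i : Fin d} (hi : (i : ℕ) < 3) :
    InOctant (p - Pi.single i 1) ↔ InOctant p ∧ 1 ≤ p i := by
  have hsub : ∀ j, (p - Pi.single i 1 : Site d) j = p j - if j = i then 1 else 0 := fun j => by
    simp [Pi.single_apply]
  simp only [InOctant, hsub]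
  constructor
  · rintro ⟨h1, h2⟩
    refine ⟨⟨fun j => ?_, fun j hj => ?_⟩, by simpa using h1 i⟩
    · have := h1 j
      split_ifs at this <;> omega
    · simpa [show j ≠ i by rintro rfl; omega] using h2 j hj
  · rintro ⟨⟨h1, h2⟩, hpi⟩
    refine ⟨fun j => ?_, fun j hj => ?_⟩
    · by_cases hj : j = i
      · subst hj; simpa using hpi
      · simpa [hj] using h1 j
    · simpa [show j ≠ i by rintro rfl; omega] using h2 j hj

/-- A unit flow from `0` to infinity in the octant `ℕ³ × {0}`. The weights are chosen so that,
with `n = |p|`, the outflow `2 / ((n+1)(n+2))` of every `p ≠ 0` equals its inflow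
`2n / (n(n+1)(n+2))`; at `p = 0` the inflow is `0 / 0 = 0`. -/
noncomputable def octantFlow (p : Site d) (i : Fin d) : ℝ :=
  if InOctant p ∧ (i : ℕ) < 3 then
    ((p i : ℝ) + 1) * (2 / (((level p : ℝ) + 1) * ((level p : ℝ) + 2) * ((level p : ℝ) + 3)))
  else 0

lemma octantFlow_nonneg (p : Site d) (i : Fin d) : 0 ≤ octantFlow p i := by
  unfold octantFlow
  split_ifs with h
  · have := h.1.level_nonneg
    have := h.1.1 i
    positivity
  · rfl

lemma sum_octantFlow (hd : 3 ≤ d) {p : Site d} (hp : InOctant p) :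
    ∑ i, octantFlow p i = 2 / (((level p : ℝ) + 1) * ((level p : ℝ) + 2)) := by
  have hn : (0 : ℝ) ≤ level p := by exact_mod_cast hp.level_nonneg
  simp only [octantFlow, hp, true_and, ← ite_zero_mul]
  rw [← sum_mul, hp.sum_ite_lt_three hd]
  field_simp

lemma octantFlow_sub_single (p : Site d) (i : Fin d) :
    octantFlow (p - Pi.single i 1) i = if InOctant p ∧ (i : ℕ) < 3 then
      (p i : ℝ) * (2 / ((level p : ℝ) * ((level p : ℝ) + 1) * ((level p : ℝ) + 2)))
    else 0 := by
  rw [octantFlow, level_sub_single]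
  by_cases hi : (i : ℕ) < 3
  · by_cases h : InOctant p ∧ 1 ≤ p i
    · rw [if_pos ⟨(inOctant_sub_single_iff hi).2 h, hi⟩, if_pos ⟨h.1, hi⟩]
      simp only [Pi.sub_apply, Pi.single_eq_same]
      push_cast
      ring
    · rw [if_neg fun h' => h ((inOctant_sub_single_iff hi).1 h'.1)]
      split_ifs with h'
      · have hlt : ¬ 1 ≤ p i := fun h1 => h ⟨h'.1, h1⟩
        have : p i = 0 := by have := h'.1.1 i; omega
        simp [this]
      · rfl
  · simp [hi]

lemma sum_octantFlow_sub_single (hd : 3 ≤ d) {p : Site d} (hp : InOctant p) :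
    ∑ i, octantFlow (p - Pi.single i 1) i =
      2 * level p / ((level p : ℝ) * ((level p : ℝ) + 1) * ((level p : ℝ) + 2)) := by
  simp only [octantFlow_sub_single, hp, true_and, ← ite_zero_mul]
  have hsum := hp.sum_ite_lt_three hd 0
  simp only [add_zero, mul_zero] at hsum
  rw [← sum_mul, hsum]
  ring

theorem sum_octantFlow_sub (hd : 3 ≤ d) (p : Site d) :
    ∑ i, (octantFlow p i - octantFlow (p - Pi.single i 1) i) = if p = 0 then 1 else 0 := by
  by_cases hp : InOctant p
  · rw [sum_sub_distrib, sum_octantFlow hd hp, sum_octantFlow_sub_single hd hp]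
    by_cases h0 : p = 0
    · simp [h0, level]
    · have : (level p : ℝ) ≠ 0 := by exact_mod_cast mt hp.eq_zero_iff.2 h0
      rw [if_neg h0]
      field_simp
      ring
  · have h0 : p ≠ 0 := fun h => hp (h ▸ inOctant_zero)
    simp only [octantFlow_sub_single]
    simp [octantFlow, hp, h0]

lemma sum_sq_octantFlow_le (hd : 3 ≤ d) {p : Site d} (hp : InOctant p) :
    ∑ i, octantFlow p i ^ 2 ≤ 4 / (((level p : ℝ) + 1) ^ 2 * ((level p : ℝ) + 2) ^ 2) := by
  calc ∑ i, octantFlow p i ^ 2 ≤ (∑ i, octantFlow p i) ^ 2 :=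
        sum_sq_le_sq_sum_of_nonneg fun i _ => octantFlow_nonneg p i
    _ = _ := by rw [sum_octantFlow hd hp, div_pow, mul_pow]; norm_num

lemma card_le_of_inOctant_level_eq (hd : 3 ≤ d) {T : Finset (Site d)} {n : ℕ}
    (hT : ∀ p ∈ T, InOctant p ∧ level p = n) : #T ≤ (n + 1) ^ 2 := by
  set f := fun p : Site d => (p ⟨0, by omega⟩, p ⟨1, by omega⟩)
  have hmaps : Set.MapsTo f T (Icc 0 (n : ℤ) ×ˢ Icc 0 (n : ℤ) : Finset (ℤ × ℤ)) := fun p hp => by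
    obtain ⟨hoct, hlev⟩ := hT p hp
    have := hoct.level_eq hd
    have := hoct.1 ⟨0, by omega⟩
    have := hoct.1 ⟨1, by omega⟩
    have := hoct.1 ⟨2, by omega⟩
    simp only [f, coe_product, coe_Icc, Set.mem_prod, Set.mem_Icc]
    omega
  have hinj : Set.InjOn f T := fun p hp q hq hpq => by
    obtain ⟨hpo, hpl⟩ := hT p hp
    obtain ⟨hqo, hql⟩ := hT q hq
    simp only [f, Prod.mk.injEq] at hpq
    have h₂ : p ⟨2, by omega⟩ = q ⟨2, by omega⟩ := by
      have := hpo.level_eq hd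
      have := hqo.level_eq hd
      omega
    funext j
    by_cases hj : (j : ℕ) < 3
    · obtain ⟨j, hj'⟩ := j
      interval_cases j
      exacts [hpq.1, hpq.2, h₂]
    · rw [hpo.2 j (by omega), hqo.2 j (by omega)]
  have := card_le_card_of_injOn _ hmaps hinj
  simpa [sq] using this

lemma sum_range_div_add_two_sq_le (N : ℕ) : ∑ n ∈ range N, 1 / ((n : ℝ) + 2) ^ 2 ≤ 1 := by
  have h := sum_Ioo_inv_sq_le (α := ℝ) 1 (N + 2)
  rw [← Ico_add_one_left_eq_Ioo, ← Nat.zero_add (1 + 1), ← sum_Ico_add', ← range_eq_Ico] at h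
  norm_num at h ⊢
  simpa [add_comm] using h

/-- The flow has energy at most `4`: the octant has `(n+1)(n+2)/2 ≤ (n+1)^2` sites at level `n`,
each carrying energy at most `4 / ((n+1)^2 (n+2)^2)`. -/
theorem sum_sum_sq_octantFlow_le (hd : 3 ≤ d) (S : Finset (Site d)) :
    ∑ p ∈ S, ∑ i, octantFlow p i ^ 2 ≤ 4 := by
  set T := S.filter InOctant
  set N := T.sup fun p => (level p).toNat
  have hT : ∑ p ∈ T, ∑ i, octantFlow p i ^ 2 = ∑ p ∈ S, ∑ i, octantFlow p i ^ 2 :=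
    sum_filter_of_ne fun p _ hp => by
      by_contra h
      simp [octantFlow, h] at hp
  rw [← hT, ← sum_fiberwise_of_maps_to (g := fun p => (level p).toNat) (t := range (N + 1))
    fun p hp => mem_range.2 (Nat.lt_succ_of_le (le_sup (f := fun p => (level p).toNat) hp))]
  have hlevel : ∀ n ∈ range (N + 1),
      ∑ p ∈ T with (level p).toNat = n, ∑ i, octantFlow p i ^ 2 ≤ 4 * (1 / ((n : ℝ) + 2) ^ 2) := by
    intro n _
    have hF : ∀ p ∈ T.filter (fun p => (level p).toNat = n), InOctant p ∧ level p = n :=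
      fun p hp => by
        simp only [T, mem_filter] at hp
        exact ⟨hp.1.2, by have := hp.1.2.level_nonneg; omega⟩
    have hcard : (#(T.filter fun p => (level p).toNat = n) : ℝ) ≤ ((n : ℝ) + 1) ^ 2 := by
      exact_mod_cast card_le_of_inOctant_level_eq hd hF
    calc ∑ p ∈ T with (level p).toNat = n, ∑ i, octantFlow p i ^ 2
        ≤ #(T.filter fun p => (level p).toNat = n) •
            (4 / (((n : ℝ) + 1) ^ 2 * ((n : ℝ) + 2) ^ 2)) :=
          sum_le_card_nsmul _ _ _ fun p hp => by
            simpa [(hF p hp).2] using sum_sq_octantFlow_le hd (hF p hp).1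
      _ ≤ ((n : ℝ) + 1) ^ 2 * (4 / (((n : ℝ) + 1) ^ 2 * ((n : ℝ) + 2) ^ 2)) := by
          rw [nsmul_eq_mul]; gcongr
      _ = 4 * (1 / ((n : ℝ) + 2) ^ 2) := by field_simp
  calc _ ≤ ∑ n ∈ range (N + 1), 4 * (1 / ((n : ℝ) + 2) ^ 2) := sum_le_sum hlevel
    _ ≤ 4 := by rw [← mul_sum]; linarith [sum_range_div_add_two_sq_le (N + 1)]

/-- Pairing the gradient of the zero extension with `octantFlow` returns its value `1` at the
origin; Cauchy–Schwarz against the flow energy `≤ 4` gives the bound. -/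
theorem one_le_four_mul_dotProduct_lapMatR_mulVec (hd : 3 ≤ d) {V : Finset (Site d)}
    (h0 : 0 ∈ V) (v : V → ℝ) (hv : v ⟨0, h0⟩ = 1) : 1 ≤ 4 * (v ⬝ᵥ lapMatR V *ᵥ v) := by
  have hunit : ∑ p ∈ backClosure V, ∑ i,
      octantFlow p i * (zeroExt V v p - zeroExt V v (p + Pi.single i 1)) = 1 := by
    rw [sum_mul_sub_shift_eq _ _ _ (mem_backClosure_of_zeroExt_ne_zero V v)]
    simp [sum_octantFlow_sub hd, subset_backClosure V h0, zeroExt, h0, hv]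
  have hCS := sum_mul_sq_le_sq_mul_sq (backClosure V ×ˢ univ) (fun z => octantFlow z.1 z.2)
    fun z => zeroExt V v z.1 - zeroExt V v (z.1 + Pi.single z.2 1)
  simp only [sum_product] at hCS
  rw [hunit, ← dotProduct_lapMatR_mulVec] at hCS
  have hQ : 0 ≤ v ⬝ᵥ lapMatR V *ᵥ v := by
    rw [dotProduct_lapMatR_mulVec]
    positivity
  nlinarith [sum_sum_sq_octantFlow_le hd (backClosure V)]

lemma det_lapMatR_erase {V : Finset (Site d)} {a : Site d} (ha : a ∈ V) :
    (lapMatR (V.erase a)).det =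
      ((lapMatR V).submatrix (Subtype.val : {j : V // j ≠ ⟨a, ha⟩} → V) Subtype.val).det := by
  let e : {j : V // j ≠ ⟨a, ha⟩} ≃ V.erase a :=
    { toFun j := ⟨j.1, mem_erase.2 ⟨fun h => j.2 (Subtype.ext h), j.1.2⟩⟩
      invFun b :=
        ⟨⟨b, mem_of_mem_erase b.2⟩, fun h => ne_of_mem_erase b.2 (congrArg Subtype.val h)⟩ }
  exact (det_submatrix_equiv_self e _).symm

end Sandpile

open Sandpile

/-- for `d ≥ 3` there is a constant `C(d) > 0` such that for every finite
`V ⊂ ℤ^d` containing `0`, `det(Δ_{V∖{0}}) / det(Δ_V) ≤ C(d)` (equivalently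
`|R_{V∖{0}}| / |R_V| ≤ C(d)`), uniformly in `V`. -/
theorem det_ratio_uniformly_bounded {d : ℕ} (hd : 3 ≤ d) :
    ∃ C : ℝ, 0 < C ∧ ∀ V : Finset (Site d), (0 : Site d) ∈ V →
      0 < (lapMatR V).det ∧
      (lapMatR (V.erase 0)).det ≤ C * (lapMatR V).det := by
  refine ⟨4, by norm_num, fun V h0 => ⟨lapMatR_det_pos (by omega) V, ?_⟩⟩
  have hpos := lapMatR_det_pos (by omega : 0 < d) (V.erase 0)
  obtain ⟨x, hx, hdet⟩ := (lapMatR V).exists_det_eq_det_submatrix_ne_mul_dotProduct ⟨0, h0⟩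
    (by rw [← det_lapMatR_erase h0]; exact hpos.ne'.isUnit)
  rw [hdet, ← det_lapMatR_erase h0]
  nlinarith [one_le_four_mul_dotProduct_lapMatR_mulVec hd h0 x hx]
end

section
/- Let μ be a probability measure such that every tail-measurable bounded function is μ-a.s. constant (tail triviality), and suppose μ is invariant under a countable family of commuting invertible measure-preserving transformations a_x, x ∈ Z^d, with the property that any two configurations in a full-measure invariant set differing in finitely many coordinates are related by a finite composition of the a_x and their inverses. Then every function f ∈ L^2(μ) satisfying f = a_x f = a_x^{-1} f μ-a.s. for all x is μ-a.s. constant. -/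
/- The Abelian sandpile model on ℤ^d.  Sites are `Fin d → ℤ`; the toppling matrix is
`Δ_{xx} = 2d`, `Δ_{xy} = -1` for nearest neighbours, `0` otherwise.  Toppling in volume `V`
uses the matrix restricted to `V` (grains leaving `V` disappear).  `LegalSeq V η l η'`
says that `l` is a sequence of legal topplings in `V` taking `η` to `η'`. -/

open scoped Classical

open MeasureTheory

abbrev Cfg (d : ℕ) := Site d → Fin (2 * d)

/-- A function is tail measurable if for every `n` it depends only on the coordinates at
sites `x` with `|x| ≥ n`. -/
def TailMeasurableFun (d : ℕ) (g : Cfg d → ℝ) : Prop :=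
  ∀ n : ℕ, ∃ h : ({x : Site d // n ≤ ∑ i, (x i).natAbs} → Fin (2 * d)) → ℝ,
    ∀ η : Cfg d, g η = h fun x => η x.1

/-! Almost surely, `f` is invariant along every finite word in the `a_x` and their inverses, so
on a full-measure set it takes the same value at any two configurations differing in finitely
many sites. It therefore agrees there with a function of the cofinite germ of the configuration,
which is tail measurable; after composing with `arctan` to make it bounded, tail triviality
makes it a.s. constant, and so is `f`. -/

open Filter MeasureTheory

theorem Filter.Germ.exists_eq_of_eventuallyEq {α β γ : Type*} [Nonempty γ] {l : Filter α}
    {S : Set (α → β)} {f : (α → β) → γ}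
    (hf : ∀ η ∈ S, ∀ ζ ∈ S, η =ᶠ[l] ζ → f η = f ζ) :
    ∃ G : Germ l β → γ, ∀ η ∈ S, G η = f η :=
  ⟨Function.extend (fun η : S => (η.1 : Germ l β)) (fun η => f η) fun _ => Classical.arbitrary γ,
    fun η hη => Function.FactorsThrough.extend_apply
      (fun (η ζ : S) h => hf η.1 η.2 ζ.1 ζ.2 (Germ.coe_eq.1 h)) _ ⟨η, hη⟩⟩

theorem ae_forall_foldr_eq {X κ β : Type*} [MeasurableSpace X] [Countable κ] {μ : Measure X}
    {T : κ → X → X} {f : X → β} (hT : ∀ p, Measure.QuasiMeasurePreserving (T p) μ μ)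
    (hf : ∀ p, f ∘ T p =ᵐ[μ] f) :
    ∀ᵐ x ∂μ, ∀ l : List κ, f (l.foldr T x) = f x := by
  refine ae_all_iff.2 fun l => ?_
  suffices Measure.QuasiMeasurePreserving (fun x => l.foldr T x) μ μ ∧
      f ∘ (fun x => l.foldr T x) =ᵐ[μ] f from this.2
  induction l with
  | nil => exact ⟨Measure.QuasiMeasurePreserving.id μ, EventuallyEq.rfl⟩
  | cons p l ih => exact ⟨(hT p).comp ih.1, (ih.1.ae_eq_comp (hf p)).trans ih.2⟩

theorem finite_setOf_sum_natAbs_lt (d n : ℕ) :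
    {x : Fin d → ℤ | ∑ i, (x i).natAbs < n}.Finite := by
  refine (Set.Finite.pi fun _ : Fin d => Set.finite_Icc (-(n : ℤ)) n).subset fun x hx i _ => ?_
  have := (Finset.single_le_sum (f := fun j => (x j).natAbs) (fun j _ => Nat.zero_le _)
    (Finset.mem_univ i)).trans_lt hx
  simp only [Set.mem_Icc]
  omega

theorem tailMeasurableFun_of_germ {d : ℕ} [Nonempty (Cfg d)]
    (G : Germ (cofinite : Filter (Site d)) (Fin (2 * d)) → ℝ) :
    TailMeasurableFun d fun η => G η := by
  intro n
  obtain ⟨η₀⟩ := ‹Nonempty (Cfg d)›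
  refine ⟨fun r => G ↑fun x => if hx : n ≤ ∑ i, (x i).natAbs then r ⟨x, hx⟩ else η₀ x,
    fun η => congrArg G (Germ.coe_eq.2 (eventually_cofinite.2 ?_))⟩
  refine (finite_setOf_sum_natAbs_lt d n).subset fun x hx => ?_
  by_contra hle
  rw [Set.notMem_ofPred_iff, not_lt] at hle
  exact hx (by simp [dif_pos hle])

theorem tail_trivial_implies_invariant_constant_general {d : ℕ}
    (μ : Measure (Cfg d)) [IsProbabilityMeasure μ]
    (a b : Site d → Cfg d → Cfg d)
    (hmp : ∀ x : Site d, MeasurePreserving (a x) μ μ ∧ MeasurePreserving (b x) μ μ)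
    (htail : ∀ g : Cfg d → ℝ, (∃ C, ∀ η, |g η| ≤ C) → TailMeasurableFun d g →
      ∃ c : ℝ, g =ᵐ[μ] fun _ => c)
    (hfull : ∃ Ω₀ : Set (Cfg d), μ Ω₀ = 1 ∧
      (∀ η ∈ Ω₀, ∀ x : Site d, a x η ∈ Ω₀ ∧ b x η ∈ Ω₀) ∧
      (∀ η ∈ Ω₀, ∀ ζ ∈ Ω₀, {x : Site d | η x ≠ ζ x}.Finite →
        ∃ l : List (Site d × Bool),
          ζ = l.foldr (fun p σ => if p.2 then a p.1 σ else b p.1 σ) η))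
    (f : Cfg d → ℝ) (hf : Measurable f)
    (hfinv : ∀ x : Site d,
      (fun η => f (a x η)) =ᵐ[μ] f ∧ (fun η => f (b x η)) =ᵐ[μ] f) :
    ∃ c : ℝ, f =ᵐ[μ] fun _ => c := by
  have := nonempty_of_isProbabilityMeasure μ
  obtain ⟨Ω₀, hΩ₀, -, hconn⟩ := hfull
  set T : Site d × Bool → Cfg d → Cfg d := fun p σ => if p.2 then a p.1 σ else b p.1 σ
  have hwords : ∀ᵐ η ∂μ, ∀ l : List (Site d × Bool), f (l.foldr T η) = f η := by
    refine ae_forall_foldr_eq (fun ⟨x, s⟩ => ?_) fun ⟨x, s⟩ => ?_ <;> cases s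
    exacts [(hmp x).2.quasiMeasurePreserving, (hmp x).1.quasiMeasurePreserving,
      (hfinv x).2, (hfinv x).1]
  set S := Ω₀ ∩ {η | ∀ l : List (Site d × Bool), f (l.foldr T η) = f η}
  have hconst : ∀ η ∈ S, ∀ ζ ∈ S, η =ᶠ[cofinite] ζ → f η = f ζ := fun η hη ζ hζ hηζ => by
    obtain ⟨l, rfl⟩ := hconn η hη.1 ζ hζ.1 (eventually_cofinite.1 hηζ)
    exact (hη.2 l).symm
  obtain ⟨G, hG⟩ := Germ.exists_eq_of_eventuallyEq hconst
  obtain ⟨c, hc⟩ := htail (fun η => Real.arctan (G η))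
    ⟨Real.pi / 2, fun _ => abs_le.2 ⟨(Real.neg_pi_div_two_lt_arctan _).le,
      (Real.arctan_lt_pi_div_two _).le⟩⟩
    (tailMeasurableFun_of_germ fun g => Real.arctan (G g))
  have hsub : S ∩ {η | Real.arctan (G η) = c} ⊆ {η | f η = Real.tan c} := fun η hη => by
    rw [Set.mem_ofPred_eq, ← hη.2, hG η hη.1, Real.tan_arctan]
  have hS : μ (S ∩ {η | Real.arctan (G η) = c}) = 1 := by
    rwa [measure_inter_conull hc, measure_inter_conull hwords]
  -- `Ω₀` need not be measurable, so pass through the measurable set `{f = tan c}`.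
  have hfc : μ {η | f η = Real.tan c} = 1 :=
    le_antisymm prob_le_one (hS ▸ measure_mono hsub)
  exact ⟨Real.tan c, (prob_compl_eq_zero_iff (hf (measurableSet_singleton _))).2 hfc⟩

/-- let `μ` be tail trivial (every bounded tail-measurable function is a.s.
constant) and invariant under a family of commuting invertible measure-preserving
transformations `a_x` (with inverses `b_x`), such that on a full-measure invariant set any
two configurations differing in finitely many coordinates are related by a finite
composition of the `a_x` and their inverses.  Then every `f ∈ L²(μ)` with
`f = a_x f = a_x⁻¹ f` a.s. for all `x` is `μ`-a.s. constant. -/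
theorem tail_trivial_implies_invariant_constant {d : ℕ}
    (μ : Measure (Cfg d)) [IsProbabilityMeasure μ]
    (a b : Site d → Cfg d → Cfg d)
    (hmeas : ∀ x : Site d, Measurable (a x) ∧ Measurable (b x))
    (hmp : ∀ x : Site d, MeasurePreserving (a x) μ μ ∧ MeasurePreserving (b x) μ μ)
    (hinv : ∀ (x : Site d) (η : Cfg d), b x (a x η) = η ∧ a x (b x η) = η)
    (hcomm : ∀ (x y : Site d) (η : Cfg d), a x (a y η) = a y (a x η))
    (htail : ∀ g : Cfg d → ℝ, (∃ C, ∀ η, |g η| ≤ C) → TailMeasurableFun d g →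
      ∃ c : ℝ, g =ᵐ[μ] fun _ => c)
    (hfull : ∃ Ω₀ : Set (Cfg d), μ Ω₀ = 1 ∧
      (∀ η ∈ Ω₀, ∀ x : Site d, a x η ∈ Ω₀ ∧ b x η ∈ Ω₀) ∧
      (∀ η ∈ Ω₀, ∀ ζ ∈ Ω₀, {x : Site d | η x ≠ ζ x}.Finite →
        ∃ l : List (Site d × Bool),
          ζ = l.foldr (fun p σ => if p.2 then a p.1 σ else b p.1 σ) η))
    (f : Cfg d → ℝ) (hf : Measurable f) (hf2 : MemLp f 2 μ)
    (hfinv : ∀ x : Site d,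
      (fun η => f (a x η)) =ᵐ[μ] f ∧ (fun η => f (b x η)) =ᵐ[μ] f) :
    ∃ c : ℝ, f =ᵐ[μ] fun _ => c :=
  tail_trivial_implies_invariant_constant_general μ a b hmp htail hfull f hf hfinv
end

section
/- Let L be a normal operator on L^2(μ) of the form L = ∑_x φ(x)(a_x − I) with each a_x unitary, φ(x) > 0 summable against the relevant Green function so that L is a Markov generator, and μ invariant under each a_x and a_x^{-1}. Then ⟨Lf, f⟩ = −(1/2) ∑_x φ(x) ∫ (a_x f − f)^2 dμ for real f, and hence Lf = 0 if and only if f is invariant under all a_x and a_x^{-1}. -/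
/- The Abelian sandpile model on ℤ^d.  Sites are `Fin d → ℤ`; the toppling matrix is
`Δ_{xx} = 2d`, `Δ_{xy} = -1` for nearest neighbours, `0` otherwise.  Toppling in volume `V`
uses the matrix restricted to `V` (grains leaving `V` disappear).  `LegalSeq V η l η'`
says that `l` is a sequence of legal topplings in `V` taking `η` to `η'`. -/

open scoped Classical

open MeasureTheory

/-!
For a measure-preserving `T` and real `f ∈ L²(μ)`, the pointwise identity
`(f ∘ T - f) f = -½ (f ∘ T - f)² + ½ ((f ∘ T)² - f²)` integrates to
`⟨(T - I) f, f⟩ = -½ ‖(T - I) f‖²`, since the last term has integral zero. Summing against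
the weights `φ x > 0` gives the Dirichlet form; it vanishes iff every `a_x f - f` vanishes in
`L²`, and invariance under `a_x` transfers to its a.e. inverse `b_x` because `b_x` preserves `μ`.
-/

namespace MeasureTheory

variable {α : Type*} [MeasurableSpace α] {μ : Measure α}

theorem MeasurePreserving.integral_comp_of_aestronglyMeasurable {T : α → α}
    (hT : MeasurePreserving T μ μ) {g : α → ℝ} (hg : AEStronglyMeasurable g μ) :
    ∫ η, g (T η) ∂μ = ∫ η, g η ∂μ := by
  rw [← hT.map_eq] at hg
  rw [← integral_map hT.measurable.aemeasurable hg, hT.map_eq]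

theorem MeasurePreserving.integral_sub_comp_mul_self {T : α → α}
    (hT : MeasurePreserving T μ μ) {f : α → ℝ} (hf : MemLp f 2 μ) :
    ∫ η, (f (T η) - f η) * f η ∂μ = -(1 / 2) * ∫ η, (f (T η) - f η) ^ 2 ∂μ := by
  have hfT : MemLp (fun η => f (T η)) 2 μ := hf.comp_measurePreserving hT
  have hpointwise : ∀ η, (f (T η) - f η) * f η
      = -(1 / 2) * (f (T η) - f η) ^ 2 + (1 / 2) * (f (T η) ^ 2 - f η ^ 2) := fun η => by ring
  have hdiff : Integrable (fun η => -(1 / 2) * (f (T η) - f η) ^ 2) μ :=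
    (hfT.sub hf).integrable_sq.const_mul _
  have hsq : Integrable (fun η => (1 / 2 : ℝ) * (f (T η) ^ 2 - f η ^ 2)) μ :=
    (hfT.integrable_sq.sub hf.integrable_sq).const_mul _
  have hsq_invariant : ∫ η, f (T η) ^ 2 ∂μ = ∫ η, f η ^ 2 ∂μ :=
    hT.integral_comp_of_aestronglyMeasurable (g := fun η => f η ^ 2) (hf.1.pow 2)
  simp only [hpointwise]
  rw [integral_add hdiff hsq, integral_const_mul, integral_const_mul,
    integral_sub hfT.integrable_sq hf.integrable_sq, hsq_invariant, sub_self, mul_zero, add_zero]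

theorem integral_sq_sub_eq_zero_iff {f g : α → ℝ} (hf : MemLp f 2 μ) (hg : MemLp g 2 μ) :
    ∫ η, (g η - f η) ^ 2 ∂μ = 0 ↔ g =ᵐ[μ] f := by
  have hint : Integrable (fun η => (g η - f η) ^ 2) μ := (hg.sub hf).integrable_sq
  rw [integral_eq_zero_iff_of_nonneg (fun η => sq_nonneg _) hint]
  refine Filter.eventually_congr (Filter.Eventually.of_forall fun η => ?_)
  simp [sub_eq_zero]

theorem ae_comp_eq_of_ae_rightInverse {β : Type*} {T S : α → α} {f : α → β}
    (hS : Measure.QuasiMeasurePreserving S μ μ)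
    (hTS : ∀ᵐ η ∂μ, T (S η) = η) (hT : (fun η => f (T η)) =ᵐ[μ] f) :
    (fun η => f (S η)) =ᵐ[μ] f := by
  filter_upwards [hS.ae hT, hTS] with η hfTS hTSη
  rw [← hfTS, hTSη]

end MeasureTheory

theorem tsum_eq_zero_iff_of_nonneg {ι M : Type*} [AddCommMonoid M] [PartialOrder M]
    [IsOrderedAddMonoid M] [TopologicalSpace M] [OrderClosedTopology M] {u : ι → M} (hu : Summable u) (h0 : 0 ≤ u) :
    ∑' i, u i = 0 ↔ ∀ i, u i = 0 := by
  rw [← hu.hasSum_iff, hasSum_zero_iff_of_nonneg h0, funext_iff]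
  rfl

theorem generator_dirichlet_form_general {d : ℕ}
    (μ : Measure (Config d)) [IsProbabilityMeasure μ]
    (a b : Site d → Config d → Config d)
    (hmp : ∀ x : Site d, MeasurePreserving (a x) μ μ ∧ MeasurePreserving (b x) μ μ)
    (hinv : ∀ x : Site d, ∀ᵐ η ∂μ, b x (a x η) = η ∧ a x (b x η) = η)
    (φ : Site d → ℝ) (hφ : ∀ x, 0 < φ x)
    (f : Config d → ℝ) (hf : Measurable f) (hfb : ∃ C, ∀ η, |f η| ≤ C)
    (hsum : Summable fun x : Site d => φ x * ∫ η, (f (a x η) - f η) ^ 2 ∂μ) :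
    (∑' x : Site d, φ x * ∫ η, (f (a x η) - f η) * f η ∂μ)
      = -(1 / 2) * ∑' x : Site d, φ x * ∫ η, (f (a x η) - f η) ^ 2 ∂μ ∧
    ((∑' x : Site d, φ x * ∫ η, (f (a x η) - f η) ^ 2 ∂μ) = 0 ↔
      ∀ x : Site d,
        (fun η => f (a x η)) =ᵐ[μ] f ∧ (fun η => f (b x η)) =ᵐ[μ] f) := by
  obtain ⟨C, hC⟩ := hfb
  have hf2 : MemLp f 2 μ :=
    MemLp.of_bound hf.aestronglyMeasurable C (Filter.Eventually.of_forall fun η => hC η)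
  have hfa : ∀ x, MemLp (fun η => f (a x η)) 2 μ := fun x =>
    hf2.comp_measurePreserving (hmp x).1
  refine ⟨?_, ?_⟩
  · rw [← tsum_mul_left]
    refine tsum_congr fun x => ?_
    rw [(hmp x).1.integral_sub_comp_mul_self hf2]
    ring
  · rw [tsum_eq_zero_iff_of_nonneg hsum fun x =>
      mul_nonneg (hφ x).le (integral_nonneg fun η => sq_nonneg _)]
    refine forall_congr' fun x => ?_
    rw [mul_eq_zero_iff_left (hφ x).ne', integral_sq_sub_eq_zero_iff hf2 (hfa x)]
    exact ⟨fun h => ⟨h, ae_comp_eq_of_ae_rightInverse (hmp x).2.quasiMeasurePreserving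
      ((hinv x).mono fun η h => h.2) h⟩, And.left⟩

/-- for the normal Markov generator `L = ∑_x φ(x)(a_x − I)` on `L²(μ)`, with
the `a_x` unitary (measure-preserving with measure-preserving inverses `b_x`) and `μ`
invariant, one has `⟨Lf, f⟩ = −(1/2) ∑_x φ(x) ∫ (a_x f − f)² dμ` for real `f`; hence
`Lf = 0` iff `f` is invariant under all `a_x` and `a_x⁻¹`. -/
theorem generator_dirichlet_form {d : ℕ}
    (μ : Measure (Config d)) [IsProbabilityMeasure μ]
    (a b : Site d → Config d → Config d)
    (hmeas : ∀ x : Site d, Measurable (a x) ∧ Measurable (b x))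
    (hmp : ∀ x : Site d, MeasurePreserving (a x) μ μ ∧ MeasurePreserving (b x) μ μ)
    (hinv : ∀ x : Site d, ∀ᵐ η ∂μ, b x (a x η) = η ∧ a x (b x η) = η)
    (φ : Site d → ℝ) (hφ : ∀ x, 0 < φ x)
    (f : Config d → ℝ) (hf : Measurable f) (hfb : ∃ C, ∀ η, |f η| ≤ C)
    (hsum : Summable fun x : Site d => φ x * ∫ η, (f (a x η) - f η) ^ 2 ∂μ) :
    (∑' x : Site d, φ x * ∫ η, (f (a x η) - f η) * f η ∂μ)
      = -(1 / 2) * ∑' x : Site d, φ x * ∫ η, (f (a x η) - f η) ^ 2 ∂μ ∧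
    ((∑' x : Site d, φ x * ∫ η, (f (a x η) - f η) ^ 2 ∂μ) = 0 ↔
      ∀ x : Site d,
        (fun η => f (a x η)) =ᵐ[μ] f ∧ (fun η => f (b x η)) =ᵐ[μ] f) :=
  generator_dirichlet_form_general μ a b hmp hinv φ hφ f hf hfb hsum
end
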